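/- arXiv:2507.13503 — 6 statements merged into one kernel-verified Lean document; each statement's English description precedes it below -/
import Mathlib

section
/- Let q ≥ 2 be an integer, β a real number, p = 1 - e^{-β}, and G a finite simple graph with vertex set V and edge set E_G. Then Σ_{f : V → ZMod q} ∏_{{v,w} ∈ E_G} exp(β·1[f(v)=f(w)]) = e^{β|E_G|} · Σ_{H ⊆ E_G} p^{|H|}(1-p)^{|E_G|-|H|} q^{c(H)}, where c(H) is the number of connected components of the spanning subgraph with edge set H. (Fortuin–Kasteleyn expansion of the q-state Potts partition function.) -/
/-!
Expand each edge weight as `e^β (p · 1[f v = f w] + (1 - p))` and multiply out over the edges: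
this gives `e^{β|E|} Σ_H p^{|H|} (1-p)^{|E|-|H|} ∏_{e ∈ H} 1[f constant on e]`. Exchanging the
sums over `f` and `H`, the inner sum counts the colourings constant along every edge of `H`,
i.e. the functions on the connected components of `(V, H)`, of which there are `q^{c(H)}`.
-/

open Finset

theorem Finset.prod_mul_add_eq_sum_powerset {ι R : Type*} [CommSemiring R]
    (s : Finset ι) (a b : R) (x : ι → R) :
    ∏ i ∈ s, (a * x i + b) =
      ∑ t ∈ s.powerset, a ^ t.card * b ^ (s.card - t.card) * ∏ i ∈ t, x i := by
  classical
  rw [prod_add]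
  refine sum_congr rfl fun t ht => ?_
  rw [prod_mul_distrib, prod_const, prod_const, card_sdiff_of_subset (mem_powerset.mp ht)]
  ring

theorem Real.exp_mul_ite_eq {β p : ℝ} (hp : p = 1 - Real.exp (-β)) (P : Prop) [Decidable P] :
    Real.exp (β * if P then 1 else 0) = Real.exp β * (p * (if P then 1 else 0) + (1 - p)) := by
  subst hp
  split_ifs
  · simp
  · simp [← Real.exp_add]

namespace SimpleGraph

variable {V α : Type*}

theorem Walk.apply_eq_of_adj_imp_eq {G : SimpleGraph V} {f : V → α}
    (hf : ∀ v w, G.Adj v w → f v = f w) {v w : V} (p : G.Walk v w) : f v = f w := by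
  induction p with
  | nil => rfl
  | cons h _ ih => exact (hf _ _ h).trans ih

def edgeConstantEquiv (G : SimpleGraph V) (α : Type*) :
    {f : V → α // ∀ v w, G.Adj v w → f v = f w} ≃ (G.ConnectedComponent → α) where
  toFun f := ConnectedComponent.lift f.1 fun _ _ p _ => p.apply_eq_of_adj_imp_eq f.2
  invFun g := ⟨g ∘ G.connectedComponentMk,
    fun _ _ h => congrArg g (ConnectedComponent.sound h.reachable)⟩
  left_inv _ := rfl
  right_inv _ := funext fun c => c.ind fun _ => rfl

theorem card_edgeConstant [Finite V] (G : SimpleGraph V) (α : Type*) :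
    Nat.card {f : V → α // ∀ v w, G.Adj v w → f v = f w} =
      Nat.card α ^ Nat.card G.ConnectedComponent := by
  rw [Nat.card_congr (G.edgeConstantEquiv α), Nat.card_fun]

/-- Loops in `s` impose no condition, which is why `fromEdgeSet` may discard them. -/
theorem forall_mem_isDiag_map_iff (s : Set (Sym2 V)) (f : V → α) :
    (∀ e ∈ s, (e.map f).IsDiag) ↔ ∀ v w, (fromEdgeSet s).Adj v w → f v = f w := by
  constructor
  · rintro h v w ⟨hvw, -⟩
    simpa using h _ hvw
  · intro h e he
    induction e with
    | _ v w =>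
      by_cases hvw : v = w
      · simp [hvw]
      · simpa using h v w ⟨he, hvw⟩

theorem sum_prod_boole_isDiag_map [Fintype V] [DecidableEq V] [Fintype α] [DecidableEq α]
    {R : Type*} [CommSemiring R] (H : Finset (Sym2 V)) :
    ∑ f : V → α, ∏ e ∈ H, (if (e.map f).IsDiag then (1 : R) else 0) =
      (Fintype.card α : R) ^ Nat.card (fromEdgeSet (H : Set (Sym2 V))).ConnectedComponent := by
  calc ∑ f : V → α, ∏ e ∈ H, (if (e.map f).IsDiag then (1 : R) else 0)
      = ∑ f : V → α, if ∀ e ∈ H, (e.map f).IsDiag then (1 : R) else 0 := by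
        -- `congr!` reconciles the two `Decidable` instances of the `∀ e ∈ H` condition
        simp only [prod_boole]; congr!
    _ = Nat.card {f : V → α // ∀ e ∈ H, (e.map f).IsDiag} := by
        rw [Nat.card_eq_fintype_card, Fintype.card_subtype, sum_boole]
    _ = (Fintype.card α : R) ^ Nat.card (fromEdgeSet (H : Set (Sym2 V))).ConnectedComponent := by
        rw [Nat.card_congr (.subtypeEquivRight (p := fun f : V → α => ∀ e ∈ H, (e.map f).IsDiag)
            (forall_mem_isDiag_map_iff _)),
          card_edgeConstant, Nat.card_eq_fintype_card, Nat.cast_pow]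

end SimpleGraph

theorem potts_partition_fk_expansion_general
    (q : ℕ) [NeZero q] (β p : ℝ) (hp : p = 1 - Real.exp (-β))
    (V : Type*) [Fintype V] [DecidableEq V]
    (G : SimpleGraph V) [DecidableRel G.Adj] :
    ∑ f : V → ZMod q,
        ∏ e ∈ G.edgeFinset, Real.exp (β * (if (e.map f).IsDiag then 1 else 0))
      = Real.exp (β * G.edgeFinset.card) *
          ∑ H ∈ G.edgeFinset.powerset,
            p ^ H.card * (1 - p) ^ (G.edgeFinset.card - H.card) *
              (q : ℝ) ^
                Nat.card (SimpleGraph.fromEdgeSet (↑H : Set (Sym2 V))).ConnectedComponent := by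
  have hweight (f : V → ZMod q) :
      ∏ e ∈ G.edgeFinset, Real.exp (β * (if (e.map f).IsDiag then 1 else 0)) =
        Real.exp (β * G.edgeFinset.card) * ∑ H ∈ G.edgeFinset.powerset,
          p ^ H.card * (1 - p) ^ (G.edgeFinset.card - H.card) *
            ∏ e ∈ H, (if (e.map f).IsDiag then 1 else 0) := by
    rw [prod_congr rfl fun e _ => Real.exp_mul_ite_eq hp _, prod_mul_distrib, prod_const,
      prod_mul_add_eq_sum_powerset, mul_comm β, Real.exp_nat_mul]
  simp_rw [hweight, ← mul_sum]
  rw [sum_comm]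
  simp_rw [← mul_sum, SimpleGraph.sum_prod_boole_isDiag_map, ZMod.card]

/-- Fortuin–Kasteleyn expansion of the `q`-state Potts partition function:
`Σ_f ∏_{{v,w} ∈ E_G} exp(β·1[f v = f w])
  = e^{β|E_G|} · Σ_{H ⊆ E_G} p^{|H|}(1-p)^{|E_G|-|H|} q^{c(H)}`
where `c(H)` is the number of connected components of the spanning subgraph with
edge set `H` and `p = 1 - e^{-β}`. -/
theorem potts_partition_fk_expansion
    (q : ℕ) (hq : 2 ≤ q) [NeZero q] (β p : ℝ) (hp : p = 1 - Real.exp (-β))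
    (V : Type*) [Fintype V] [DecidableEq V]
    (G : SimpleGraph V) [DecidableRel G.Adj] :
    ∑ f : V → ZMod q,
        ∏ e ∈ G.edgeFinset, Real.exp (β * (if (e.map f).IsDiag then 1 else 0))
      = Real.exp (β * G.edgeFinset.card) *
          ∑ H ∈ G.edgeFinset.powerset,
            p ^ H.card * (1 - p) ^ (G.edgeFinset.card - H.card) *
              (q : ℝ) ^
                Nat.card (SimpleGraph.fromEdgeSet (↑H : Set (Sym2 V))).ConnectedComponent :=
  potts_partition_fk_expansion_general q β p hp V G
end

section
/- Fix an integer q ≥ 2, finite types E (edges) and U (plaquettes), a ZMod q-linear map δ¹ : (E → ZMod q) → (U → ZMod q), a real β, and p = 1 - e^{-β}. Then Σ_{f : E → ZMod q} exp(β · #{x ∈ U : δ¹ f x = 0}) = e^{β|U|} · Σ_{S ⊆ U} p^{|S|} (1-p)^{|U|-|S|} · #{f : E → ZMod q | ∀ x ∈ S, δ¹ f x = 0}. (Expansion of the Potts lattice gauge theory partition function over percolation configurations.) -/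
/-!
Write `Z f = {x | δ¹ f x = 0}` and `n = |U|`. Since `1 - p = e^{-β}`, the weight of `f` is
`e^{β|Z f|} = e^{βn} (1 - p)^{n - |Z f|}`, and by the binomial theorem
`(1 - p)^{n - |Z f|} = Σ_{S ⊆ Z f} p^{|S|} (1 - p)^{n - |S|}`. Summing over `f` and exchanging the
two sums, each `S` is counted once for every `f` with `S ⊆ Z f`.
-/

open Finset

theorem Finset.sum_powerset_pow_mul_pow_card_sub {α R : Type*} [CommSemiring R]
    {s t : Finset α} (hst : s ⊆ t) (a b : R) :
    ∑ u ∈ s.powerset, a ^ #u * b ^ (#t - #u) = (a + b) ^ #s * b ^ (#t - #s) := by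
  rw [← sum_pow_mul_eq_add_pow, sum_mul]
  refine sum_congr rfl fun u hu => ?_
  have hus := card_le_card (mem_powerset.1 hu)
  have hst := card_le_card hst
  rw [mul_assoc, ← pow_add]
  congr 2
  omega

theorem Fintype.sum_subset_pow_mul_one_sub_pow {α R : Type*} [Fintype α] [DecidableEq α]
    [CommRing R] (s : Finset α) (p : R) :
    ∑ u : Finset α, (if u ⊆ s then p ^ #u * (1 - p) ^ (Fintype.card α - #u) else 0)
      = (1 - p) ^ (Fintype.card α - #s) := by
  have hfilter : univ.filter (· ⊆ s) = s.powerset := by ext; simp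
  rw [← sum_filter, hfilter, ← card_univ, sum_powerset_pow_mul_pow_card_sub (subset_univ s),
    add_sub_cancel, one_pow, one_mul]

theorem Real.exp_mul_natCast_eq_exp_mul_exp_neg_pow (β : ℝ) {k n : ℕ} (hkn : k ≤ n) :
    Real.exp (β * k) = Real.exp (β * n) * Real.exp (-β) ^ (n - k) := by
  rw [← Real.exp_nat_mul, ← Real.exp_add, Nat.cast_sub hkn]
  ring_nf

theorem sum_exp_mul_card_filter_eq {F U : Type*} [Fintype F] [Fintype U]
    (P : F → U → Prop) [∀ f, DecidablePred (P f)] (β p : ℝ) (hp : p = 1 - Real.exp (-β)) :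
    ∑ f : F, Real.exp (β * ((univ.filter fun x => P f x).card : ℝ))
      = Real.exp (β * Fintype.card U) *
          ∑ S : Finset U, p ^ S.card * (1 - p) ^ (Fintype.card U - S.card) *
            (Nat.card {f : F // ∀ x ∈ S, P f x} : ℝ) := by
  classical
  have hp' : 1 - p = Real.exp (-β) := by rw [hp]; ring
  have hcard (S : Finset U) :
      (Nat.card {f : F // ∀ x ∈ S, P f x} : ℝ)
        = ∑ f : F, if S ⊆ univ.filter (P f) then 1 else 0 := by
    simp [Nat.card_eq_fintype_card, Fintype.card_subtype, subset_iff]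
  have hweight (f : F) : Real.exp (β * ((univ.filter fun x => P f x).card : ℝ))
      = Real.exp (β * Fintype.card U) * ∑ S : Finset U, if S ⊆ univ.filter (P f)
          then p ^ S.card * (1 - p) ^ (Fintype.card U - S.card) else 0 := by
    rw [Fintype.sum_subset_pow_mul_one_sub_pow, hp', ← card_univ]
    exact Real.exp_mul_natCast_eq_exp_mul_exp_neg_pow β (card_le_card (subset_univ _))
  rw [sum_congr rfl fun f _ => hweight f, ← mul_sum]
  congr 1
  simp_rw [hcard, mul_sum, mul_ite, mul_one, mul_zero]
  exact sum_comm

theorem plgt_partition_expansion_general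
    (q : ℕ) [NeZero q] (E U : Type*) [DecidableEq E] [Fintype E] [Fintype U]
    (δ1 : (E → ZMod q) →ₗ[ZMod q] (U → ZMod q))
    (β p : ℝ) (hp : p = 1 - Real.exp (-β)) :
    ∑ f : E → ZMod q,
        Real.exp (β * ((Finset.univ.filter fun x => δ1 f x = 0).card : ℝ))
      = Real.exp (β * Fintype.card U) *
          ∑ S : Finset U,
            p ^ S.card * (1 - p) ^ (Fintype.card U - S.card) *
              (Nat.card {f : E → ZMod q // ∀ x ∈ S, δ1 f x = 0} : ℝ) :=
  sum_exp_mul_card_filter_eq (fun f x => δ1 f x = 0) β p hp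

/-- Expansion of the Potts lattice gauge theory partition function over
percolation configurations:
`Σ_f exp(β · #{x : δ¹ f x = 0})
  = e^{β|U|} · Σ_{S ⊆ U} p^{|S|}(1-p)^{|U|-|S|} · #{f | ∀ x ∈ S, δ¹ f x = 0}`
with `p = 1 - e^{-β}`. -/
theorem plgt_partition_expansion
    (q : ℕ) (hq : 2 ≤ q) [NeZero q] (E U : Type*) [DecidableEq E] [Fintype E] [Fintype U]
    [DecidableEq U]
    (δ1 : (E → ZMod q) →ₗ[ZMod q] (U → ZMod q))
    (β p : ℝ) (hp : p = 1 - Real.exp (-β)) :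
    ∑ f : E → ZMod q,
        Real.exp (β * ((Finset.univ.filter fun x => δ1 f x = 0).card : ℝ))
      = Real.exp (β * Fintype.card U) *
          ∑ S : Finset U,
            p ^ S.card * (1 - p) ^ (Fintype.card U - S.card) *
              (Nat.card {f : E → ZMod q // ∀ x ∈ S, δ1 f x = 0} : ℝ) :=
  plgt_partition_expansion_general q E U δ1 β p hp
end

section
/- Fix an integer q ≥ 2, finite types V, E, U, ZMod q-linear maps δ⁰ : (V → ZMod q) → (E → ZMod q) and δ¹ : (E → ZMod q) → (U → ZMod q) with δ¹ ∘ δ⁰ = 0, a real β, and p = 1 - e^{-β}. Then Σ_{f : E → ZMod q} exp(β · #{x ∈ U : δ¹ f x = 0}) = e^{β|U|} · Nat.card (range δ⁰) · Σ_{S ⊆ U} p^{|S|}(1-p)^{|U|-|S|} · Nat.card (Z¹_S / B¹), where Z¹_S = {f | ∀ x ∈ S, δ¹ f x = 0} and B¹ = range δ⁰ ≤ Z¹_S. (The Potts lattice gauge theory partition function equals, up to the explicit prefactor, the plaquette random-cluster partition function.) -/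
/-!
Expand each weight as `e^{βk} = (1 + (e^β - 1))^k = Σ_S (e^β - 1)^|S|`, the sum running over the
sets `S` of plaquettes on which `δ¹ f` vanishes, and swap the two sums: the inner sum over `f` then
counts the cocycles `Z¹_S`, and `|Z¹_S| = |B¹| · |Z¹_S / B¹|`. Finally, with `p = 1 - e^{-β}`,
`e^{β|U|} p^|S| (1-p)^{|U|-|S|} = (e^β - 1)^|S|`.
-/

open Finset LinearMap

theorem add_one_pow_card_filter {ι R : Type*} [Fintype ι] [CommSemiring R] (a : R)
    (P : ι → Prop) [DecidablePred P] :
    (a + 1) ^ #{x | P x} = ∑ S : Finset ι, if ∀ x ∈ S, P x then a ^ #S else 0 := by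
  rw [← sum_pow_mul_eq_add_pow, ← sum_filter]
  refine sum_congr (by ext S; simp [subset_iff]) fun S _ => by simp

section Cocycles

variable {R M N U : Type*} [Ring R] [AddCommGroup M] [Module R M] [AddCommGroup N] [Module R N]

theorem mem_iInf_ker_proj_comp {δ : M →ₗ[R] U → N} {S : Finset U} {f : M} :
    f ∈ ⨅ x ∈ S, ker ((proj x).comp δ) ↔ ∀ x ∈ S, δ f x = 0 := by
  simp [Submodule.mem_iInf]

theorem range_le_iInf_ker_proj_comp {V : Type*} [AddCommGroup V] [Module R V]
    {δ₀ : V →ₗ[R] M} {δ : M →ₗ[R] U → N} (hδ : ∀ g, δ (δ₀ g) = 0) (S : Finset U) :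
    range δ₀ ≤ ⨅ x ∈ S, ker ((proj x).comp δ) := by
  rintro _ ⟨g, rfl⟩
  simp [hδ g]

theorem sum_ite_forall_apply_eq_zero [Fintype M] [DecidableEq N] {A : Type*} [AddCommMonoid A]
    (δ : M →ₗ[R] U → N) (S : Finset U) (c : A) :
    ∑ f : M, (if ∀ x ∈ S, δ f x = 0 then c else 0) =
      Nat.card ↥(⨅ x ∈ S, ker ((proj x).comp δ)) • c := by
  classical
  rw [← sum_filter, sum_const, Nat.card_eq_fintype_card, Fintype.card_subtype]
  simp_rw [mem_iInf_ker_proj_comp]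

end Cocycles

theorem Submodule.card_eq_card_mul_card_quotient_comap {R M : Type*} [Ring R] [AddCommGroup M]
    [Module R M] {B Z : Submodule R M} (h : B ≤ Z) :
    Nat.card Z = Nat.card B * Nat.card (Z ⧸ comap Z.subtype B) := by
  rw [card_eq_card_quotient_mul_card (comap Z.subtype B),
    Nat.card_congr (comapSubtypeEquivOfLe h).toEquiv]

theorem exp_mul_mul_bernoulli_weight {β p : ℝ} (hp : p = 1 - Real.exp (-β)) {k n : ℕ}
    (hkn : k ≤ n) :
    Real.exp (β * n) * (p ^ k * (1 - p) ^ (n - k)) = (Real.exp β - 1) ^ k := by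
  have hinv : Real.exp β * Real.exp (-β) = 1 := by
    rw [← Real.exp_add, add_neg_cancel, Real.exp_zero]
  obtain ⟨m, rfl⟩ := Nat.exists_eq_add_of_le hkn
  rw [Nat.add_sub_cancel_left, hp, sub_sub_cancel, mul_comm β, Real.exp_nat_mul, pow_add]
  calc Real.exp β ^ k * Real.exp β ^ m * ((1 - Real.exp (-β)) ^ k * Real.exp (-β) ^ m)
      = (Real.exp β * (1 - Real.exp (-β))) ^ k * (Real.exp β * Real.exp (-β)) ^ m := by
        rw [mul_pow, mul_pow]; ring
    _ = (Real.exp β - 1) ^ k := by rw [mul_sub, mul_one, hinv, one_pow, mul_one]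

theorem plgt_partition_eq_prcm_partition_general
    (q : ℕ) [NeZero q] (V E U : Type*)
    [DecidableEq E] [Fintype E] [Fintype U]
    (δ0 : (V → ZMod q) →ₗ[ZMod q] (E → ZMod q))
    (δ1 : (E → ZMod q) →ₗ[ZMod q] (U → ZMod q))
    (hδ : ∀ g : V → ZMod q, δ1 (δ0 g) = 0)
    (β p : ℝ) (hp : p = 1 - Real.exp (-β)) :
    ∑ f : E → ZMod q,
        Real.exp (β * ((Finset.univ.filter fun x => δ1 f x = 0).card : ℝ))
      = Real.exp (β * Fintype.card U) * (Nat.card (LinearMap.range δ0) : ℝ) *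
          ∑ S : Finset U,
            p ^ S.card * (1 - p) ^ (Fintype.card U - S.card) *
              (Nat.card
                (↥(⨅ x ∈ S, LinearMap.ker ((LinearMap.proj x).comp δ1)) ⧸
                  Submodule.comap
                    (⨅ x ∈ S, LinearMap.ker ((LinearMap.proj x).comp δ1)).subtype
                    (LinearMap.range δ0)) : ℝ) := by
  calc ∑ f : E → ZMod q, Real.exp (β * (#{x | δ1 f x = 0} : ℝ))
      = ∑ f : E → ZMod q, ∑ S : Finset U,
          if ∀ x ∈ S, δ1 f x = 0 then (Real.exp β - 1) ^ #S else 0 := by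
        refine sum_congr rfl fun f _ => ?_
        rw [mul_comm, Real.exp_nat_mul, ← add_one_pow_card_filter, sub_add_cancel]
    _ = ∑ S : Finset U, ∑ f : E → ZMod q,
          if ∀ x ∈ S, δ1 f x = 0 then (Real.exp β - 1) ^ #S else 0 := sum_comm
    _ = _ := by
        rw [mul_sum]
        refine sum_congr rfl fun S _ => ?_
        rw [sum_ite_forall_apply_eq_zero, nsmul_eq_mul,
          Submodule.card_eq_card_mul_card_quotient_comap (range_le_iInf_ker_proj_comp hδ S),
          ← exp_mul_mul_bernoulli_weight hp (card_le_univ S)]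
        push_cast
        ring

/-- The Potts lattice gauge theory partition function equals, up to the explicit
prefactor `e^{β|U|} · |B¹|`, the plaquette random-cluster partition function:
`Σ_f exp(β · #{x : δ¹ f x = 0})
  = e^{β|U|} · |range δ⁰| · Σ_{S ⊆ U} p^{|S|}(1-p)^{|U|-|S|} · |Z¹_S / B¹|`. -/
theorem plgt_partition_eq_prcm_partition
    (q : ℕ) (hq : 2 ≤ q) [NeZero q] (V E U : Type*)
    [Fintype V] [DecidableEq E] [Fintype E] [Fintype U] [DecidableEq U]
    (δ0 : (V → ZMod q) →ₗ[ZMod q] (E → ZMod q))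
    (δ1 : (E → ZMod q) →ₗ[ZMod q] (U → ZMod q))
    (hδ : ∀ g : V → ZMod q, δ1 (δ0 g) = 0)
    (β p : ℝ) (hp : p = 1 - Real.exp (-β)) :
    ∑ f : E → ZMod q,
        Real.exp (β * ((Finset.univ.filter fun x => δ1 f x = 0).card : ℝ))
      = Real.exp (β * Fintype.card U) * (Nat.card (LinearMap.range δ0) : ℝ) *
          ∑ S : Finset U,
            p ^ S.card * (1 - p) ^ (Fintype.card U - S.card) *
              (Nat.card
                (↥(⨅ x ∈ S, LinearMap.ker ((LinearMap.proj x).comp δ1)) ⧸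
                  Submodule.comap
                    (⨅ x ∈ S, LinearMap.ker ((LinearMap.proj x).comp δ1)).subtype
                    (LinearMap.range δ0)) : ℝ) :=
  plgt_partition_eq_prcm_partition_general q V E U δ0 δ1 hδ β p hp
end

section
/- Fix an integer q ≥ 2, finite types E and U, a ZMod q-linear map δ¹ : (E → ZMod q) → (U → ZMod q), a real β ≥ 0, and p = 1 - e^{-β}. Define K̃(f,S) = ∏_{x ∈ U} ((1-p)·1[x ∉ S] + p·1[x ∈ S]·1[δ¹ f x = 0]). Then for every finset S ⊆ U, Σ_{f : E → ZMod q} K̃(f,S) = p^{|S|}(1-p)^{|U|-|S|} · Nat.card {f : E → ZMod q | ∀ x ∈ S, δ¹ f x = 0}. In particular, the marginal on S of the normalized coupling is the plaquette random-cluster measure with parameters p and q. -/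
open Finset

theorem Finset.prod_ite_mem_weight_eq {R U : Type*} [CommSemiring R] [Fintype U] [DecidableEq U]
    (S : Finset U) (P : U → Prop) [DecidablePred P] (a b : R) :
    ∏ x : U, (b * (if x ∉ S then 1 else 0) + a * (if x ∈ S then 1 else 0) * (if P x then 1 else 0))
      = a ^ #S * b ^ (Fintype.card U - #S) * (if ∀ x ∈ S, P x then 1 else 0) := by
  have h_on : ∀ x ∈ S, b * (if x ∉ S then 1 else 0) + a * (if x ∈ S then 1 else 0) *
      (if P x then 1 else 0) = a * (if P x then 1 else 0) := by
    intro x hx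
    simp [hx]
  have h_off : ∀ x ∈ Sᶜ, b * (if x ∉ S then 1 else 0) + a * (if x ∈ S then 1 else 0) *
      (if P x then (1 : R) else 0) = b := by
    intro x hx
    simp [mem_compl.mp hx]
  rw [← prod_mul_prod_compl S, prod_congr rfl h_on, prod_congr rfl h_off, prod_mul_distrib,
    prod_const, prod_const, card_compl, prod_boole, mul_right_comm]
  -- the two sides differ only in the `Decidable` instance of the last `if`
  congr

theorem edwards_sokal_marginal_on_plaquettes_general
    (q : ℕ) [NeZero q] (E U : Type*)
    [DecidableEq E] [Fintype E] [Fintype U] [DecidableEq U]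
    (δ1 : (E → ZMod q) →ₗ[ZMod q] (U → ZMod q))
    (p : ℝ)
    (K : (E → ZMod q) → Finset U → ℝ)
    (hK : ∀ f S, K f S = ∏ x : U,
      ((1 - p) * (if x ∉ S then 1 else 0) +
        p * (if x ∈ S then 1 else 0) * (if δ1 f x = 0 then 1 else 0)))
    (S : Finset U) :
    ∑ f : E → ZMod q, K f S
      = p ^ S.card * (1 - p) ^ (Fintype.card U - S.card) *
          (Nat.card {f : E → ZMod q // ∀ x ∈ S, δ1 f x = 0} : ℝ) := by
  simp only [hK, prod_ite_mem_weight_eq, ← mul_sum, sum_boole]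
  rw [Nat.card_eq_fintype_card, Fintype.card_subtype]

/-- Marginal on plaquette sets of the unnormalized Edwards–Sokal coupling: for
every `S ⊆ U`,
`Σ_f K̃(f,S) = p^{|S|}(1-p)^{|U|-|S|} · #{f | ∀ x ∈ S, δ¹ f x = 0}`,
i.e. the marginal on `S` is the plaquette random-cluster measure. -/
theorem edwards_sokal_marginal_on_plaquettes
    (q : ℕ) (hq : 2 ≤ q) [NeZero q] (E U : Type*)
    [DecidableEq E] [Fintype E] [Fintype U] [DecidableEq U]
    (δ1 : (E → ZMod q) →ₗ[ZMod q] (U → ZMod q))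
    (β : ℝ) (hβ : 0 ≤ β) (p : ℝ) (hp : p = 1 - Real.exp (-β))
    (K : (E → ZMod q) → Finset U → ℝ)
    (hK : ∀ f S, K f S = ∏ x : U,
      ((1 - p) * (if x ∉ S then 1 else 0) +
        p * (if x ∈ S then 1 else 0) * (if δ1 f x = 0 then 1 else 0)))
    (S : Finset U) :
    ∑ f : E → ZMod q, K f S
      = p ^ S.card * (1 - p) ^ (Fintype.card U - S.card) *
          (Nat.card {f : E → ZMod q // ∀ x ∈ S, δ1 f x = 0} : ℝ) :=
  edwards_sokal_marginal_on_plaquettes_general q E U δ1 p K hK S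
end

section
/- Fix an integer q ≥ 2, finite types E and U, a ZMod q-linear map δ¹ : (E → ZMod q) → (U → ZMod q), a real β > 0, and p = 1 - e^{-β}. Let K̃(f,S) = ∏_{x ∈ U} ((1-p)·1[x ∉ S] + p·1[x ∈ S]·1[δ¹ f x = 0]), let T(f, f*) = Σ_{S ⊆ U} [K̃(f,S)/Σ_{S'} K̃(f,S')] · [K̃(f*,S)/Σ_{f'} K̃(f',S)] be the plaquette Swendsen–Wang transition probability, and let ν(f) = exp(β·#{x : δ¹ f x = 0}) / Σ_{f'} exp(β·#{x : δ¹ f' x = 0}) be the q-state Potts lattice gauge Gibbs distribution. Then ν satisfies detailed balance for T: for all cochains f, f* : E → ZMod q, ν(f)·T(f, f*) = ν(f*)·T(f*, f). -/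
/-- The Potts lattice gauge Gibbs distribution `ν` satisfies detailed balance
for the plaquette Swendsen–Wang transition `T`:
`ν(f)·T(f,f*) = ν(f*)·T(f*,f)` for all cochains `f, f*`. -/
theorem plaquette_swendsen_wang_detailed_balance
    (q : ℕ) (hq : 2 ≤ q) [NeZero q] (E U : Type*)
    [DecidableEq E] [Fintype E] [Fintype U] [DecidableEq U]
    (δ1 : (E → ZMod q) →ₗ[ZMod q] (U → ZMod q))
    (β : ℝ) (hβ : 0 < β) (p : ℝ) (hp : p = 1 - Real.exp (-β))
    (K : (E → ZMod q) → Finset U → ℝ)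
    (hK : ∀ f S, K f S = ∏ x : U,
      ((1 - p) * (if x ∉ S then 1 else 0) +
        p * (if x ∈ S then 1 else 0) * (if δ1 f x = 0 then 1 else 0)))
    (T : (E → ZMod q) → (E → ZMod q) → ℝ)
    (hT : ∀ f fs, T f fs = ∑ S : Finset U,
      (K f S / ∑ S' : Finset U, K f S') *
        (K fs S / ∑ f' : E → ZMod q, K f' S))
    (ν : (E → ZMod q) → ℝ)
    (hν : ∀ f, ν f =
      Real.exp (β * ((Finset.univ.filter fun x => δ1 f x = 0).card : ℝ)) /
        ∑ f' : E → ZMod q,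
          Real.exp (β * ((Finset.univ.filter fun x => δ1 f' x = 0).card : ℝ))) :
    ∀ f fs : E → ZMod q, ν f * T f fs = ν fs * T fs f := by
  intro f fs
  -- The partition function over subsets factorizes.
  have hsum : ∀ g : E → ZMod q, (∑ S : Finset U, K g S)
      = Real.exp (-β * (Fintype.card U : ℝ)) *
        Real.exp (β * ((Finset.univ.filter fun x => δ1 g x = 0).card : ℝ)) := by
    intro g
    have h1 : (∑ S : Finset U, K g S)
        = ∏ x : U, (p * (if δ1 g x = 0 then 1 else 0) + (1 - p)) := by
      rw [Finset.prod_add]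
      rw [← Finset.powerset_univ]
      refine Finset.sum_congr rfl fun S hS => ?_
      rw [hK]
      rw [← Finset.prod_mul_prod_compl S, Finset.compl_eq_univ_sdiff]
      congr 1
      · exact Finset.prod_congr rfl fun x hx => by simp [hx]
      · refine Finset.prod_congr rfl fun x hx => by
          simp [(Finset.mem_sdiff.mp hx).2]
    rw [h1, ← Real.exp_add]
    have h2 : -β * (Fintype.card U : ℝ) +
        β * ((Finset.univ.filter fun x => δ1 g x = 0).card : ℝ)
        = ∑ x : U, (-β + β * (if δ1 g x = 0 then (1:ℝ) else 0)) := by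
      rw [Finset.sum_add_distrib, Finset.sum_const, ← Finset.mul_sum,
        Finset.sum_boole]
      simp [nsmul_eq_mul, Finset.card_univ]
      ring
    rw [h2, Real.exp_sum]
    refine Finset.prod_congr rfl fun x _ => ?_
    by_cases h : δ1 g x = 0 <;> simp [h, hp, ← Real.exp_add]
  have hexp : ∀ r : ℝ, Real.exp r ≠ 0 := fun r => (Real.exp_pos r).ne'
  have hZpos : (0:ℝ) < ∑ f' : E → ZMod q,
      Real.exp (β * ((Finset.univ.filter fun x => δ1 f' x = 0).card : ℝ)) :=
    Finset.sum_pos (fun _ _ => Real.exp_pos _) Finset.univ_nonempty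
  have key : ∀ g : E → ZMod q, ∀ S : Finset U,
      ν g * (K g S / ∑ S' : Finset U, K g S')
      = K g S / (Real.exp (-β * (Fintype.card U : ℝ)) *
          (∑ f' : E → ZMod q,
            Real.exp (β * ((Finset.univ.filter fun x => δ1 f' x = 0).card : ℝ)))) := by
    intro g S
    rw [hν, hsum]
    field_simp
  rw [hT f fs, hT fs f, Finset.mul_sum, Finset.mul_sum]
  refine Finset.sum_congr rfl fun S _ => ?_
  rw [← mul_assoc, key f S, ← mul_assoc, key fs S]
  ring
end

section
/- Fix an integer q ≥ 2, finite types E and U, a ZMod q-linear map δ¹ : (E → ZMod q) → (U → ZMod q), a real β > 0, and p = 1 - e^{-β}. Let K̃(f,S) = ∏_{x ∈ U} ((1-p)·1[x ∉ S] + p·1[x ∈ S]·1[δ¹ f x = 0]), let T(f, f*) = Σ_{S ⊆ U} [K̃(f,S)/Σ_{S'} K̃(f,S')] · [K̃(f*,S)/Σ_{f'} K̃(f',S)], and let ν(f) = exp(β·#{x : δ¹ f x = 0}) / Σ_{f'} exp(β·#{x : δ¹ f' x = 0}). Then ν is stationary for T: for every cochain f* : E → ZMod q, Σ_{f : E → ZMod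 q} ν(f)·T(f, f*) = ν(f*). -/
set_option maxHeartbeats 1000000


/-- The Potts lattice gauge Gibbs distribution `ν` is stationary for the
plaquette Swendsen–Wang transition `T`:
`Σ_f ν(f)·T(f,f*) = ν(f*)` for every cochain `f*`. -/
theorem plaquette_swendsen_wang_stationary
    (q : ℕ) (hq : 2 ≤ q) [NeZero q] (E U : Type*)
    [DecidableEq E] [Fintype E] [Fintype U] [DecidableEq U]
    (δ1 : (E → ZMod q) →ₗ[ZMod q] (U → ZMod q))
    (β : ℝ) (hβ : 0 < β) (p : ℝ) (hp : p = 1 - Real.exp (-β))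
    (K : (E → ZMod q) → Finset U → ℝ)
    (hK : ∀ f S, K f S = ∏ x : U,
      ((1 - p) * (if x ∉ S then 1 else 0) +
        p * (if x ∈ S then 1 else 0) * (if δ1 f x = 0 then 1 else 0)))
    (T : (E → ZMod q) → (E → ZMod q) → ℝ)
    (hT : ∀ f fs, T f fs = ∑ S : Finset U,
      (K f S / ∑ S' : Finset U, K f S') *
        (K fs S / ∑ f' : E → ZMod q, K f' S))
    (ν : (E → ZMod q) → ℝ)
    (hν : ∀ f, ν f =
      Real.exp (β * ((Finset.univ.filter fun x => δ1 f x = 0).card : ℝ)) /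
        ∑ f' : E → ZMod q,
          Real.exp (β * ((Finset.univ.filter fun x => δ1 f' x = 0).card : ℝ))) :
    ∀ fs : E → ZMod q, ∑ f : E → ZMod q, ν f * T f fs = ν fs := by
  intro fs
  have hep : 0 < Real.exp (-β) := Real.exp_pos _
  have hep1 : Real.exp (-β) < 1 := by
    rw [Real.exp_lt_one_iff]; linarith
  have hp0 : 0 < p := by rw [hp]; linarith
  have hp1 : p < 1 := by rw [hp]; linarith
  set n : (E → ZMod q) → ℕ :=
    fun f => (Finset.univ.filter fun x => δ1 f x = 0).card with hn
  -- nonnegativity of K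
  have hKnn : ∀ f S, 0 ≤ K f S := by
    intro f S
    rw [hK]
    apply Finset.prod_nonneg
    intro x _
    split_ifs <;> nlinarith
  -- sum of K over S
  have hsum : ∀ f, ∑ S : Finset U, K f S
      = Real.exp (β * (n f : ℝ)) * Real.exp (-(β * (Fintype.card U : ℝ))) := by
    intro f
    have h1 : ∀ S : Finset U, K f S
        = (∏ x ∈ S, p * (if δ1 f x = 0 then 1 else 0)) *
          ∏ x ∈ Finset.univ \ S, (1 - p) := by
      intro S
      rw [hK]
      have h2 : ∀ x : U,
          ((1 - p) * (if x ∉ S then 1 else 0) +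
            p * (if x ∈ S then 1 else 0) * (if δ1 f x = 0 then 1 else 0))
          = (if x ∈ S then p * (if δ1 f x = 0 then 1 else 0) else (1 - p)) := by
        intro x
        by_cases hx : x ∈ S <;> simp [hx]
      rw [Finset.prod_congr rfl (fun x _ => h2 x), Finset.prod_ite]
      congr 1
      · apply Finset.prod_congr _ (fun _ _ => rfl)
        simp
      · apply Finset.prod_congr _ (fun _ _ => rfl)
        ext x; simp
    calc ∑ S : Finset U, K f S
        = ∑ S : Finset U, (∏ x ∈ S, p * (if δ1 f x = 0 then 1 else 0)) *
            ∏ x ∈ Finset.univ \ S, (1 - p) :=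
          Finset.sum_congr rfl (fun S _ => h1 S)
      _ = ∏ x : U, (p * (if δ1 f x = 0 then 1 else 0) + (1 - p)) := by
          rw [Finset.prod_add, ← Finset.powerset_univ]
      _ = ∏ x : U, Real.exp (if δ1 f x = 0 then 0 else -β) := by
          apply Finset.prod_congr rfl
          intro x _
          by_cases hx : δ1 f x = 0 <;> simp [hx, hp]
      _ = Real.exp (∑ x : U, (if δ1 f x = 0 then (0:ℝ) else -β)) := by
          rw [Real.exp_sum]
      _ = Real.exp (β * (n f : ℝ)) * Real.exp (-(β * (Fintype.card U : ℝ))) := by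
          rw [← Real.exp_add]
          congr 1
          rw [Finset.sum_ite, Finset.sum_const, Finset.sum_const]
          have hkey := Finset.card_filter_add_card_filter_not
            (s := (Finset.univ : Finset U)) (p := fun x => δ1 f x = 0)
          rw [Finset.card_univ] at hkey
          have hnf : n f = (Finset.univ.filter fun x => δ1 f x = 0).card := rfl
          have hcard : (Finset.univ.filter fun x => ¬ δ1 f x = 0).card
              = Fintype.card U - n f := by omega
          rw [hcard]
          have hle : n f ≤ Fintype.card U := by omega
          rw [← hnf, smul_zero, nsmul_eq_mul, Nat.cast_sub hle]
          ring
  -- positivity of the per-S normalizer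
  have hB : ∀ S : Finset U, 0 < ∑ f' : E → ZMod q, K f' S := by
    intro S
    apply Finset.sum_pos' (fun f _ => hKnn f S)
    refine ⟨0, Finset.mem_univ _, ?_⟩
    rw [hK]
    apply Finset.prod_pos
    intro x _
    have h0 : δ1 0 x = 0 := by rw [map_zero]; rfl
    rw [if_pos h0, mul_one]
    by_cases hx : x ∈ S <;> simp [hx] <;> linarith
  set Z := ∑ f' : E → ZMod q, Real.exp (β * (n f' : ℝ)) with hZ
  have hν' : ∀ f, ν f = Real.exp (β * (n f : ℝ)) / Z := hν
  have hZpos : 0 < Z := Finset.sum_pos (fun _ _ => Real.exp_pos _) Finset.univ_nonempty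
  have hc : (0:ℝ) < Real.exp (-(β * (Fintype.card U : ℝ))) := Real.exp_pos _
  calc ∑ f : E → ZMod q, ν f * T f fs
      = ∑ f : E → ZMod q, ∑ S : Finset U,
          K f S * K fs S /
            ((∑ f' : E → ZMod q, K f' S) * Z * Real.exp (-(β * (Fintype.card U : ℝ)))) := by
        apply Finset.sum_congr rfl
        intro f _
        rw [hν' f, hT f fs, Finset.mul_sum]
        apply Finset.sum_congr rfl
        intro S _
        rw [hsum f]
        have he : Real.exp (β * (n f : ℝ)) ≠ 0 := (Real.exp_pos _).ne'
        rw [div_mul_div_comm, div_mul_div_comm,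
          div_eq_div_iff
            (mul_ne_zero hZpos.ne' (mul_ne_zero (mul_ne_zero he hc.ne') (hB S).ne'))
            (mul_ne_zero (mul_ne_zero (hB S).ne' hZpos.ne') hc.ne')]
        ring
    _ = ∑ S : Finset U,
          (∑ f : E → ZMod q, K f S) * K fs S /
            ((∑ f' : E → ZMod q, K f' S) * Z * Real.exp (-(β * (Fintype.card U : ℝ)))) := by
        rw [Finset.sum_comm]
        apply Finset.sum_congr rfl
        intro S _
        rw [← Finset.sum_div, ← Finset.sum_mul]
    _ = ∑ S : Finset U, K fs S / (Z * Real.exp (-(β * (Fintype.card U : ℝ)))) := by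
        apply Finset.sum_congr rfl
        intro S _
        have hBS := (hB S).ne'
        field_simp
    _ = ν fs := by
        rw [← Finset.sum_div, hsum fs, hν' fs]
        have he : Real.exp (-(β * (Fintype.card U : ℝ))) ≠ 0 := hc.ne'
        field_simp
end
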